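/- Let G be a group with elements σ₁, …, σ_k satisfying the braid relations, δ_n = σ_n ⋯ σ₁ and γ_n = σ₁ ⋯ σ_n. Then for 2 ≤ t ≤ k, δ_k^t = δ_{k−1}^{t−1} · σ_k · δ_{k−1} · γ_{t−1}; in particular δ_k^t contains exactly one occurrence of σ_k when written in this form. -/
import Mathlib

/-- `deltaB σ n = σ n * σ (n-1) * ... * σ 1` (with `deltaB σ 0 = 1`). -/
def deltaB {G : Type*} [Group G] (σ : ℕ → G) (n : ℕ) : G :=
  ((List.range n).map (fun i => σ (n - i))).prod

/-- `gammaB σ n = σ 1 * σ 2 * ... * σ n` (with `gammaB σ 0 = 1`). -/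
def gammaB {G : Type*} [Group G] (σ : ℕ → G) (n : ℕ) : G :=
  ((List.range n).map (fun i => σ (i + 1))).prod

/-- `ascB σ a c = σ a * σ (a+1) * ... * σ (a+c)`. -/
def ascB {G : Type*} [Group G] (σ : ℕ → G) (a c : ℕ) : G :=
  ((List.range (c + 1)).map (fun i => σ (a + i))).prod

section
variable {G : Type*} [Group G] (σ : ℕ → G)

lemma deltaB_zero : deltaB σ 0 = 1 := by simp [deltaB]

lemma deltaB_succ (n : ℕ) : deltaB σ (n + 1) = σ (n + 1) * deltaB σ n := by
  unfold deltaB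
  rw [List.range_succ_eq_map]
  simp only [List.map_cons, List.map_map, List.prod_cons, Nat.sub_zero]
  have h : ((fun i => σ (n + 1 - i)) ∘ Nat.succ) = fun i => σ (n - i) := by
    funext i; simp only [Function.comp_apply]; congr 1; omega
  rw [h]

lemma gammaB_succ (n : ℕ) : gammaB σ (n + 1) = gammaB σ n * σ (n + 1) := by
  unfold gammaB
  rw [List.range_succ]
  simp

lemma ascB_zero (a : ℕ) : ascB σ a 0 = σ a := by
  simp [ascB, List.range_succ]

lemma ascB_succ_front (a c : ℕ) : ascB σ a (c + 1) = σ a * ascB σ (a + 1) c := by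
  unfold ascB
  rw [List.range_succ_eq_map]
  simp only [List.map_cons, List.map_map, List.prod_cons, Nat.add_zero]
  have h : ((fun i => σ (a + i)) ∘ Nat.succ) = fun i => σ (a + 1 + i) := by
    funext i; simp only [Function.comp_apply]; congr 1; omega
  rw [h]

lemma ascB_succ_back (a c : ℕ) : ascB σ a (c + 1) = ascB σ a c * σ (a + (c + 1)) := by
  unfold ascB
  conv_lhs => rw [List.range_succ]
  simp

lemma gammaB_eq_ascB (n : ℕ) : gammaB σ (n + 1) = ascB σ 1 n := by
  induction n with
  | zero =>
      rw [gammaB_succ, ascB_zero]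
      simp [gammaB]
  | succ p ih =>
      rw [gammaB_succ, ih, ascB_succ_back]
      congr 2
      omega

end

section braidlemmas
variable {G : Type*} [Group G]

lemma swap_x {a b : G} (h : a * b = b * a) (x : G) :
    a * (b * x) = b * (a * x) := by rw [← mul_assoc, h, mul_assoc]

lemma braid_x {a b c : G} (h : a * b * a = c * a * b) (x : G) :
    a * (b * (a * x)) = c * (a * (b * x)) := by
  simp only [← mul_assoc]
  rw [h]

variable (σ : ℕ → G) (k : ℕ)

lemma comm_deltaB (hcomm : ∀ i j, 1 ≤ i → i + 1 < j → j ≤ k → σ i * σ j = σ j * σ i) :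
    ∀ n j, n + 1 < j → j ≤ k → σ j * deltaB σ n = deltaB σ n * σ j := by
  intro n
  induction n with
  | zero => intro j _ _; simp [deltaB_zero]
  | succ p ih =>
      intro j h1 h2
      rw [deltaB_succ, ← mul_assoc, ← hcomm (p + 1) j (by omega) (by omega) h2,
        mul_assoc, ih j (by omega) h2, ← mul_assoc]

lemma comm_ascB (hcomm : ∀ i j, 1 ≤ i → i + 1 < j → j ≤ k → σ i * σ j = σ j * σ i) :
    ∀ c a j, 1 ≤ a → a + c + 1 < j → j ≤ k → σ j * ascB σ a c = ascB σ a c * σ j := by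
  intro c
  induction c with
  | zero =>
      intro a j ha h1 h2
      rw [ascB_zero]
      exact (hcomm a j ha (by omega) h2).symm
  | succ p ih =>
      intro a j ha h1 h2
      rw [ascB_succ_back, ← mul_assoc, ih a j ha (by omega) h2, mul_assoc,
        ← hcomm (a + (p + 1)) j (by omega) (by omega) h2, ← mul_assoc]

lemma braid_deltaB (hcomm : ∀ i j, 1 ≤ i → i + 1 < j → j ≤ k → σ i * σ j = σ j * σ i)
    (hbraid : ∀ i, 1 ≤ i → i + 1 ≤ k →
      σ i * σ (i + 1) * σ i = σ (i + 1) * σ i * σ (i + 1)) :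
    ∀ m, 1 ≤ m → m + 1 ≤ k →
      σ (m + 1) * deltaB σ m * σ (m + 1) = σ m * σ (m + 1) * deltaB σ m := by
  intro m hm hmk
  obtain ⟨p, rfl⟩ : ∃ p, m = p + 1 := ⟨m - 1, by omega⟩
  have hc : σ (p + 1 + 1) * deltaB σ p = deltaB σ p * σ (p + 1 + 1) :=
    comm_deltaB σ k hcomm p (p + 1 + 1) (by omega) hmk
  have hb := hbraid (p + 1) (by omega) hmk
  rw [deltaB_succ]
  calc σ (p + 1 + 1) * (σ (p + 1) * deltaB σ p) * σ (p + 1 + 1)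
      = σ (p + 1 + 1) * σ (p + 1) * (deltaB σ p * σ (p + 1 + 1)) := by
        simp only [mul_assoc]
    _ = σ (p + 1 + 1) * σ (p + 1) * (σ (p + 1 + 1) * deltaB σ p) := by rw [← hc]
    _ = σ (p + 1 + 1) * σ (p + 1) * σ (p + 1 + 1) * deltaB σ p := by
        simp only [mul_assoc]
    _ = σ (p + 1) * σ (p + 1 + 1) * σ (p + 1) * deltaB σ p := by rw [← hb]
    _ = σ (p + 1) * σ (p + 1 + 1) * (σ (p + 1) * deltaB σ p) := by
        simp only [mul_assoc]

lemma deltaB_sq (hcomm : ∀ i j, 1 ≤ i → i + 1 < j → j ≤ k → σ i * σ j = σ j * σ i)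
    (hbraid : ∀ i, 1 ≤ i → i + 1 ≤ k →
      σ i * σ (i + 1) * σ i = σ (i + 1) * σ i * σ (i + 1)) :
    ∀ n, 1 ≤ n → n ≤ k →
      deltaB σ n * deltaB σ n = deltaB σ (n - 1) * deltaB σ n * σ 1 := by
  intro n hn
  induction n, hn using Nat.le_induction with
  | base =>
      intro _
      simp [deltaB_succ, deltaB_zero, mul_assoc]
  | succ n hn ih =>
      intro hk
      have ih' := ih (by omega)
      simp only [Nat.add_sub_cancel] at *
      obtain ⟨p, rfl⟩ : ∃ p, n = p + 1 := ⟨n - 1, by omega⟩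
      simp only [Nat.add_sub_cancel] at ih'
      have bd := braid_deltaB σ k hcomm hbraid (p + 1) (by omega) hk
      have hc : σ (p + 1 + 1) * deltaB σ p = deltaB σ p * σ (p + 1 + 1) :=
        comm_deltaB σ k hcomm p (p + 1 + 1) (by omega) hk
      rw [deltaB_succ σ (p + 1)]
      simp only [mul_assoc]
      rw [braid_x bd (deltaB σ (p + 1))]
      rw [show deltaB σ (p + 1) * deltaB σ (p + 1)
            = deltaB σ p * (deltaB σ (p + 1) * σ 1) by
          simpa [mul_assoc] using ih']
      rw [swap_x hc]
      rw [deltaB_succ σ p]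
      simp only [mul_assoc]

lemma deltaB_shift (hcomm : ∀ i j, 1 ≤ i → i + 1 < j → j ≤ k → σ i * σ j = σ j * σ i)
    (hbraid : ∀ i, 1 ≤ i → i + 1 ≤ k →
      σ i * σ (i + 1) * σ i = σ (i + 1) * σ i * σ (i + 1)) :
    ∀ j m, 1 ≤ j → j + 1 ≤ m → m ≤ k →
      deltaB σ m * σ (j + 1) = σ j * deltaB σ m := by
  intro j m hj hjm
  induction m, hjm using Nat.le_induction with
  | base =>
      intro hk
      have bd := braid_deltaB σ k hcomm hbraid j hj hk
      rw [deltaB_succ, bd, mul_assoc]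
  | succ m hm ih =>
      intro hk
      rw [deltaB_succ, mul_assoc, ih (by omega)]
      rw [swap_x ((hcomm j (m + 1) hj (by omega) hk).symm), ← mul_assoc]

lemma ascB_shift (hcomm : ∀ i j, 1 ≤ i → i + 1 < j → j ≤ k → σ i * σ j = σ j * σ i)
    (hbraid : ∀ i, 1 ≤ i → i + 1 ≤ k →
      σ i * σ (i + 1) * σ i = σ (i + 1) * σ i * σ (i + 1)) :
    ∀ c m, c + 2 ≤ m → m ≤ k →
      ascB σ 1 c * deltaB σ m = deltaB σ m * ascB σ 2 c := by
  intro c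
  induction c with
  | zero =>
      intro m h1 h2
      rw [ascB_zero, ascB_zero]
      exact (deltaB_shift σ k hcomm hbraid 1 m le_rfl (by omega) h2).symm
  | succ c ih =>
      intro m h1 h2
      rw [ascB_succ_back σ 1 c, ascB_succ_back σ 2 c]
      have hs := deltaB_shift σ k hcomm hbraid (c + 2) m (by omega) (by omega) h2
      rw [show (1 : ℕ) + (c + 1) = c + 2 by omega, show (2 : ℕ) + (c + 1) = c + 2 + 1 by omega]
      rw [mul_assoc, ← hs, ← mul_assoc, ih m (by omega) h2, mul_assoc]

end braidlemmas

theorem stmt10 {G : Type*} [Group G] (σ : ℕ → G) (k : ℕ)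
    (hcomm : ∀ i j, 1 ≤ i → i + 1 < j → j ≤ k → σ i * σ j = σ j * σ i)
    (hbraid : ∀ i, 1 ≤ i → i + 1 ≤ k →
      σ i * σ (i + 1) * σ i = σ (i + 1) * σ i * σ (i + 1)) :
    ∀ t, 2 ≤ t → t ≤ k →
      (deltaB σ k) ^ t =
        (deltaB σ (k - 1)) ^ (t - 1) * σ k * deltaB σ (k - 1) * gammaB σ (t - 1) := by
  intro t ht
  induction t, ht using Nat.le_induction with
  | base =>
      intro hk
      obtain ⟨m, rfl⟩ : ∃ m, k = m + 1 := ⟨k - 1, by omega⟩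
      have hm : 1 ≤ m := by omega
      obtain ⟨p, rfl⟩ : ∃ p, m = p + 1 := ⟨m - 1, by omega⟩
      simp only [Nat.add_sub_cancel]
      have g1 : gammaB σ (2 - 1) = σ 1 := by
        rw [show (2:ℕ) - 1 = 0 + 1 by omega, gammaB_eq_ascB, ascB_zero]
      have bd := braid_deltaB σ (p + 1 + 1) hcomm hbraid (p + 1) (by omega) le_rfl
      have dsq := deltaB_sq σ (p + 1 + 1) hcomm hbraid (p + 1) (by omega) (by omega)
      simp only [Nat.add_sub_cancel] at dsq
      have hc : σ (p + 1 + 1) * deltaB σ p = deltaB σ p * σ (p + 1 + 1) :=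
        comm_deltaB σ (p + 1 + 1) hcomm p (p + 1 + 1) (by omega) le_rfl
      rw [show (2:ℕ) - 1 = 1 by omega, pow_one, pow_two, g1, deltaB_succ σ (p + 1)]
      simp only [mul_assoc]
      rw [braid_x bd]
      rw [show deltaB σ (p + 1) * deltaB σ (p + 1)
            = deltaB σ p * (deltaB σ (p + 1) * σ 1) by
          simpa [mul_assoc] using dsq]
      rw [swap_x hc, ← mul_assoc (σ (p + 1)) (deltaB σ p), ← deltaB_succ]
  | succ t ht ih =>
      intro hk
      have ih' := ih (by omega)
      obtain ⟨s, rfl⟩ : ∃ s, t = s + 2 := ⟨t - 2, by omega⟩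
      obtain ⟨m, rfl⟩ : ∃ m, k = m + 1 := ⟨k - 1, by omega⟩
      obtain ⟨p, rfl⟩ : ∃ p, m = p + 1 := ⟨m - 1, by omega⟩
      have hsm : s + 2 ≤ p + 1 := by omega
      simp only [Nat.add_sub_cancel] at ih' ⊢
      rw [show s + 2 - 1 = s + 1 by omega] at ih'
      have git2 : gammaB σ (s + 2) = σ 1 * ascB σ 2 s := by
        rw [show s + 2 = (s + 1) + 1 by omega, gammaB_eq_ascB, ascB_succ_front]
      have hca : σ (p + 1 + 1) * ascB σ 1 s = ascB σ 1 s * σ (p + 1 + 1) :=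
        comm_ascB σ (p + 1 + 1) hcomm s 1 (p + 1 + 1) le_rfl (by omega) le_rfl
      have bd := braid_deltaB σ (p + 1 + 1) hcomm hbraid (p + 1) (by omega) le_rfl
      have as := ascB_shift σ (p + 1 + 1) hcomm hbraid s (p + 1) (by omega) (by omega)
      have dsq := deltaB_sq σ (p + 1 + 1) hcomm hbraid (p + 1) (by omega) (by omega)
      simp only [Nat.add_sub_cancel] at dsq
      have hc2 : σ (p + 1 + 1) * deltaB σ p = deltaB σ p * σ (p + 1 + 1) :=
        comm_deltaB σ (p + 1 + 1) hcomm p (p + 1 + 1) (by omega) le_rfl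
      have dsqx : ∀ x : G, deltaB σ (p + 1) * (deltaB σ (p + 1) * x)
          = deltaB σ p * (deltaB σ (p + 1) * (σ 1 * x)) := by
        intro x
        simp only [← mul_assoc]
        rw [dsq]
      rw [pow_succ, ih', gammaB_eq_ascB, git2, deltaB_succ σ (p + 1)]
      conv_rhs => rw [pow_succ]
      simp only [mul_assoc]
      rw [← swap_x hca, braid_x bd, as, dsqx,
        swap_x hc2, ← mul_assoc (σ (p + 1)) (deltaB σ p), ← deltaB_succ]
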